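/- arXiv:2109.04754 — 2 statements merged into one kernel-verified Lean document; each statement's English description precedes it below -/
import Mathlib

section
/- Let k be a field, let M be a monoidal category, and let F, G : M ⥤ fdVect_k be monoidal functors into the category of finite-dimensional k-vector spaces. If F is non-degenerate, then any two monoidal natural transformations η, η' : F ⟶ G are equal. (Consequently, a monoidal natural isomorphism F ≅ G, if it exists, is unique.) -/
/-!
Naturality and the unit axiom force `η_X (F f (ε_F 1)) = G f (ε_G 1)` for every
`f : 𝟙 ⟶ X`, a value independent of `η`; by non-degeneracy these vectors span `F X`.
-/

open CategoryTheory MonoidalCategory Functor.LaxMonoidal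

universe u v u'

/-- The element `1 : k` of the tensor unit of `FGModuleCat k`. -/
noncomputable def FGModuleCat.unitOne (k : Type u) [Field k] : 𝟙_ (FGModuleCat k) := (1 : k)

/-- A monoidal functor into `FGModuleCat k` is non-degenerate if, for every object `X`,
the vector space `F.obj X` is spanned by the vectors `F.map f (ε_F 1)`
for `f : 𝟙_ M ⟶ X` a morphism in `M`. -/
def CategoryTheory.Functor.Nondegenerate {k : Type u} [Field k]
    {M : Type u'} [Category.{v} M] [MonoidalCategory M]
    (F : M ⥤ FGModuleCat k) [F.Monoidal] : Prop :=
  ∀ X : M, Submodule.span k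
    {v : F.obj X | ∃ f : 𝟙_ M ⟶ X, v = F.map f (ε F (FGModuleCat.unitOne k))} = ⊤

theorem CategoryTheory.NatTrans.IsMonoidal.ε_comp_map_comp_app
    {C D : Type*} [Category C] [Category D] [MonoidalCategory C] [MonoidalCategory D]
    {F G : C ⥤ D} [F.LaxMonoidal] [G.LaxMonoidal] (θ : F ⟶ G) [NatTrans.IsMonoidal θ]
    {X : C} (f : 𝟙_ C ⟶ X) :
    ε F ≫ F.map f ≫ θ.app X = ε G ≫ G.map f := by
  rw [θ.naturality, NatTrans.IsMonoidal.unit_assoc]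

theorem CategoryTheory.NatTrans.ext_of_nondegenerate {k : Type u} [Field k]
    {M : Type u'} [Category.{v} M] [MonoidalCategory M]
    {F G : M ⥤ FGModuleCat k} [F.Monoidal] (hF : F.Nondegenerate) {θ θ' : F ⟶ G}
    (h : ∀ (X : M) (f : 𝟙_ M ⟶ X), θ.app X (F.map f (ε F (FGModuleCat.unitOne k))) =
      θ'.app X (F.map f (ε F (FGModuleCat.unitOne k)))) :
    θ = θ' := by
  ext X : 2
  refine ConcreteCategory.hom_injective (LinearMap.ext_on (hF X) ?_)
  rintro _ ⟨f, rfl⟩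
  exact h X f

/-- Any two monoidal natural transformations out of a non-degenerate monoidal functor
into `fdVect_k` (towards a fixed monoidal functor `G`) are equal. -/
theorem monoidalNatTrans_unique_of_nondegenerate
    {k : Type u} [Field k] {M : Type u'} [Category.{v} M] [MonoidalCategory M]
    (F G : M ⥤ FGModuleCat k) [F.Monoidal] [G.Monoidal]
    (hF : F.Nondegenerate)
    (η η' : F ⟶ G) [NatTrans.IsMonoidal η] [NatTrans.IsMonoidal η'] :
    η = η' := by
  refine NatTrans.ext_of_nondegenerate hF fun X f => ?_
  have hη := congr($(NatTrans.IsMonoidal.ε_comp_map_comp_app η f) (FGModuleCat.unitOne k))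
  have hη' := congr($(NatTrans.IsMonoidal.ε_comp_map_comp_app η' f) (FGModuleCat.unitOne k))
  simp only [ConcreteCategory.comp_apply] at hη hη'
  rw [hη, hη']
end

section
/- (Key technical lemma for the comparison of TQFTs.) Let k be a field, let M be a rigid monoidal category, and let F, G : M ⥤ fdVect_k be monoidal functors into the category of finite-dimensional k-vector spaces. Suppose that: (i) F is non-degenerate; (ii) for every object X of M one has dim_k F(X) ≥ dim_k G(X); and (iii) F and G agree on endomorphisms of the unit object, i.e. for every φ : 𝟙 ⟶ 𝟙 in M one has ε_F⁻¹ ∘ F(φ) ∘ ε_F = ε_G⁻¹ ∘ G(φ) ∘ ε_G as linear endomorphisms of k. Then there exists a unique monoidal natural isomorphism between F and G. -/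
/-!
For each `X`, send `x : F X` to the family `(η_F (F g x))_{g : X ⟶ 𝟙}`. This map is injective:
for `h : 𝟙 ⟶ Xᘁ`, the evaluation `F Xᘁ ⊗ F X → k` at `F h (ε_F 1) ⊗ x` is one entry of the family,
so if the family vanishes, non-degeneracy of `F` at `Xᘁ` makes the evaluation kill `x`, and the
image under `F` of the zigzag identity gives `x = 0`. By (iii) the generators `F f (ε_F 1)` and
`G f (ε_G 1)` have the same images, so the dimension bound forces the corresponding map for `G` to
be injective as well, and `F f (ε_F 1) ↦ G f (ε_G 1)` is a well-defined linear isomorphism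
`F X ≅ G X`. Since the generators are compatible with `F.map` and with `μ`, these isomorphisms form
a monoidal natural isomorphism. Conversely every monoidal natural transformation sends generators
to generators, which gives uniqueness.
-/

open CategoryTheory MonoidalCategory Functor.LaxMonoidal

universe u v u'

open Functor.OplaxMonoidal

theorem exists_linearEquiv_apply_eq_of_injective {K V V' W ι : Type*} [Field K]
    [AddCommGroup V] [Module K V] [AddCommGroup V'] [Module K V'] [FiniteDimensional K V']
    [AddCommGroup W] [Module K W] {s : ι → V} {t : ι → V'} {f : V →ₗ[K] W} {g : V' →ₗ[K] W}
    (hs : Submodule.span K (Set.range s) = ⊤) (hf : Function.Injective f)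
    (hfg : ∀ i, f (s i) = g (t i)) (hdim : Module.finrank K V' ≤ Module.finrank K V) :
    ∃ e : V ≃ₗ[K] V', ∀ i, e (s i) = t i := by
  have hle : LinearMap.range f ≤ LinearMap.range g := by
    rw [LinearMap.range_eq_map, ← hs, Submodule.map_span, Submodule.span_le, ← Set.range_comp]
    rintro _ ⟨i, rfl⟩
    exact ⟨t i, (hfg i).symm⟩
  have hrank_f := LinearMap.finrank_range_of_inj hf
  have hrank_g := LinearMap.finrank_range_add_finrank_ker g
  have hrange : LinearMap.range f = LinearMap.range g :=
    Submodule.eq_of_le_of_finrank_le hle (by rw [hrank_f]; omega)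
  have hg : Function.Injective g := by
    rw [← LinearMap.ker_eq_bot, ← Submodule.finrank_eq_zero]
    rw [← hrange, hrank_f] at hrank_g
    omega
  refine ⟨(LinearEquiv.ofInjective f hf).trans ((LinearEquiv.ofEq _ _ hrange).trans
    (LinearEquiv.ofInjective g hg).symm), fun i => hg ?_⟩
  simp [← hfg i]

namespace CategoryTheory.Functor

variable {C : Type*} [Category C] [MonoidalCategory C]
  {D : Type*} [Category D] [MonoidalCategory D] (F : C ⥤ D) [F.Monoidal]

theorem Monoidal.map_evaluation_coevaluation (X Y : C) [ExactPairing X Y] :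
    (ε F ≫ F.map (η_ X Y) ≫ δ F X Y) ▷ F.obj X ≫ (α_ (F.obj X) (F.obj Y) (F.obj X)).hom ≫
      F.obj X ◁ (μ F Y X ≫ F.map (ε_ X Y) ≫ η F) =
    (λ_ (F.obj X)).hom ≫ (ρ_ (F.obj X)).inv := by
  have hδμ : δ F X Y ▷ F.obj X ≫ (α_ (F.obj X) (F.obj Y) (F.obj X)).hom ≫ F.obj X ◁ μ F Y X =
      μ F (X ⊗ Y) X ≫ F.map (α_ X Y X).hom ≫ δ F X (Y ⊗ X) := by
    rw [← cancel_epi (μ F X Y ▷ F.obj X)]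
    simp
  simp only [comp_whiskerRight, MonoidalCategory.whiskerLeft_comp, Category.assoc]
  rw [reassoc_of% hδμ]
  simp only [μ_natural_left_assoc, δ_natural_right_assoc, ← F.map_comp_assoc]
  rw [ExactPairing.evaluation_coevaluation]
  simp

theorem LaxMonoidal.leftUnitor_inv_comp_whiskerRight_comp_μ {X Y : C} (h : 𝟙_ C ⟶ Y) :
    (λ_ (F.obj X)).inv ≫ (ε F ≫ F.map h) ▷ F.obj X ≫ μ F Y X = F.map ((λ_ X).inv ≫ h ▷ X) := by
  simp

theorem LaxMonoidal.leftUnitor_inv_comp_tensorHom_comp_μ {X Y : C} (f : 𝟙_ C ⟶ X)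
    (g : 𝟙_ C ⟶ Y) :
    (λ_ (𝟙_ D)).inv ≫ ((ε F ≫ F.map f) ⊗ₘ (ε F ≫ F.map g)) ≫ μ F X Y =
      ε F ≫ F.map ((λ_ (𝟙_ C)).inv ≫ (f ⊗ₘ g)) := by
  simp [MonoidalCategory.tensorHom_def, unitors_inv_equal]

end CategoryTheory.Functor

namespace FGModuleCat

variable {k : Type u} [Field k]

theorem leftUnitor_hom_unitOne_tmul {V : FGModuleCat k} (v : V) :
    (λ_ V).hom (unitOne k ⊗ₜ v) = v :=
  one_smul k v

theorem eq_zero_of_forall_evaluation_tmul_eq_zero {V W : FGModuleCat k}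
    (coev : 𝟙_ (FGModuleCat k) ⟶ V ⊗ W) (ev : W ⊗ V ⟶ 𝟙_ (FGModuleCat k))
    (zigzag : coev ▷ V ≫ (α_ V W V).hom ≫ V ◁ ev = (λ_ V).hom ≫ (ρ_ V).inv)
    {v : V} (hv : ∀ w : W, ev (w ⊗ₜ v) = 0) : v = 0 := by
  have hzero : ∀ t : TensorProduct k V W, (V ◁ ev) ((α_ V W V).hom (t ⊗ₜ v)) = 0 := by
    intro t
    induction t using TensorProduct.induction_on with
    | zero => rw [TensorProduct.zero_tmul, map_zero, map_zero]
    | tmul a b => exact (congrArg (a ⊗ₜ ·) (hv b)).trans (TensorProduct.tmul_zero _ a)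
    | add s t hs ht => rw [TensorProduct.add_tmul, map_add, map_add, hs, ht, add_zero]
  have h := ConcreteCategory.congr_hom (zigzag =≫ (ρ_ V).hom) (unitOne k ⊗ₜ v)
  simp only [Category.assoc, Iso.inv_hom_id, Category.comp_id] at h
  rw [← leftUnitor_hom_unitOne_tmul v, ← h]
  exact (congrArg (ρ_ V).hom (hzero _)).trans (map_zero _)

end FGModuleCat

namespace CategoryTheory.Functor

variable {k : Type u} [Field k] {M : Type u'} [Category.{v} M] [MonoidalCategory M]
  (F : M ⥤ FGModuleCat k) [F.Monoidal]

noncomputable def mapUnitOne {X : M} (f : 𝟙_ M ⟶ X) : F.obj X :=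
  F.map f (ε F (FGModuleCat.unitOne k))

theorem map_mapUnitOne {X Y : M} (f : 𝟙_ M ⟶ X) (u : X ⟶ Y) :
    F.map u (F.mapUnitOne f) = F.mapUnitOne (f ≫ u) := by
  rw [mapUnitOne, mapUnitOne, F.map_comp]
  rfl

theorem mapUnitOne_id : F.mapUnitOne (𝟙 (𝟙_ M)) = ε F (FGModuleCat.unitOne k) := by
  rw [mapUnitOne, F.map_id]
  rfl

theorem μ_mapUnitOne_tmul {X Y : M} (f : 𝟙_ M ⟶ X) (g : 𝟙_ M ⟶ Y) :
    μ F X Y (F.mapUnitOne f ⊗ₜ F.mapUnitOne g) = F.mapUnitOne ((λ_ (𝟙_ M)).inv ≫ (f ⊗ₘ g)) :=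
  ConcreteCategory.congr_hom (LaxMonoidal.leftUnitor_inv_comp_tensorHom_comp_μ F f g)
    (FGModuleCat.unitOne k)

noncomputable def unitPairing (X : M) : F.obj X →ₗ[k] (X ⟶ 𝟙_ M) → 𝟙_ (FGModuleCat k) :=
  LinearMap.pi fun g => (F.map g ≫ η F).hom.hom

theorem unitPairing_apply {X : M} (x : F.obj X) (g : X ⟶ 𝟙_ M) :
    F.unitPairing X x g = η F (F.map g x) := rfl

theorem unitPairing_mapUnitOne {X : M} (f : 𝟙_ M ⟶ X) (g : X ⟶ 𝟙_ M) :
    F.unitPairing X (F.mapUnitOne f) g =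
      (ε F ≫ F.map (f ≫ g) ≫ η F) (FGModuleCat.unitOne k) := by
  rw [unitPairing_apply, map_mapUnitOne, mapUnitOne, F.map_comp]
  rfl

theorem unitPairing_injective {X Y : M} [ExactPairing X Y]
    (hY : Submodule.span k (Set.range (F.mapUnitOne (X := Y))) = ⊤) :
    Function.Injective (F.unitPairing X) := by
  rw [injective_iff_map_eq_zero]
  intro x hx
  let ev : F.obj Y ⊗ F.obj X ⟶ 𝟙_ (FGModuleCat k) := μ F Y X ≫ F.map (ε_ X Y) ≫ η F
  have hev : ev.hom.hom ∘ₗ (TensorProduct.mk k (F.obj Y) (F.obj X)).flip x = 0 := by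
    refine LinearMap.ext_on_range hY fun h => ?_
    have := ConcreteCategory.congr_hom
      (LaxMonoidal.leftUnitor_inv_comp_whiskerRight_comp_μ F (X := X) h =≫
        (F.map (ε_ X Y) ≫ η F)) x
    rw [← F.map_comp_assoc] at this
    exact this.trans (congr_fun hx _)
  exact FGModuleCat.eq_zero_of_forall_evaluation_tmul_eq_zero _ ev
    (Monoidal.map_evaluation_coevaluation F X Y) fun w => LinearMap.congr_fun hev w

variable {F}

theorem Nondegenerate.span_range_mapUnitOne (hF : F.Nondegenerate) (X : M) :
    Submodule.span k (Set.range (F.mapUnitOne (X := X))) = ⊤ := by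
  convert hF X using 2
  ext v
  exact exists_congr fun f => eq_comm

theorem Nondegenerate.hom_ext (hF : F.Nondegenerate) {X : M} {V : FGModuleCat k}
    {a b : F.obj X ⟶ V} (h : ∀ f : 𝟙_ M ⟶ X, a (F.mapUnitOne f) = b (F.mapUnitOne f)) :
    a = b :=
  ConcreteCategory.ext (LinearMap.ext_on_range (hF.span_range_mapUnitOne X) h)

theorem Nondegenerate.tensor_hom_ext (hF : F.Nondegenerate) {X Y : M} {V : FGModuleCat k}
    {a b : F.obj X ⊗ F.obj Y ⟶ V}
    (h : ∀ (f : 𝟙_ M ⟶ X) (g : 𝟙_ M ⟶ Y),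
      a (F.mapUnitOne f ⊗ₜ F.mapUnitOne g) = b (F.mapUnitOne f ⊗ₜ F.mapUnitOne g)) : a = b := by
  have hspan := Submodule.map₂_span_span k (TensorProduct.mk k (F.obj X) (F.obj Y))
    (Set.range F.mapUnitOne) (Set.range F.mapUnitOne)
  rw [hF.span_range_mapUnitOne, hF.span_range_mapUnitOne,
    TensorProduct.map₂_mk_top_top_eq_top] at hspan
  refine ConcreteCategory.ext (LinearMap.ext_on hspan.symm ?_)
  rintro _ ⟨_, ⟨f, rfl⟩, _, ⟨g, rfl⟩, rfl⟩
  exact h f g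

theorem unitPairing_mapUnitOne_eq {G : M ⥤ FGModuleCat k} [G.Monoidal]
    (hunit : ∀ φ : 𝟙_ M ⟶ 𝟙_ M, ε F ≫ F.map φ ≫ CategoryTheory.inv (ε F) =
      ε G ≫ G.map φ ≫ CategoryTheory.inv (ε G))
    {X : M} (f : 𝟙_ M ⟶ X) :
    F.unitPairing X (F.mapUnitOne f) = G.unitPairing X (G.mapUnitOne f) := by
  funext g
  rw [unitPairing_mapUnitOne, unitPairing_mapUnitOne, ← Monoidal.inv_ε, ← Monoidal.inv_ε, hunit]

theorem Nondegenerate.exists_linearEquiv_apply_mapUnitOne (hF : F.Nondegenerate)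
    {G : M ⥤ FGModuleCat k} [G.Monoidal]
    (hunit : ∀ φ : 𝟙_ M ⟶ 𝟙_ M, ε F ≫ F.map φ ≫ CategoryTheory.inv (ε F) =
      ε G ≫ G.map φ ≫ CategoryTheory.inv (ε G))
    (X : M) [HasRightDual X] (hdim : Module.finrank k (G.obj X) ≤ Module.finrank k (F.obj X)) :
    ∃ e : F.obj X ≃ₗ[k] G.obj X, ∀ f : 𝟙_ M ⟶ X, e (F.mapUnitOne f) = G.mapUnitOne f :=
  exists_linearEquiv_apply_eq_of_injective (hF.span_range_mapUnitOne X)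
    (F.unitPairing_injective (hF.span_range_mapUnitOne Xᘁ)) (unitPairing_mapUnitOne_eq hunit) hdim

end CategoryTheory.Functor

namespace CategoryTheory.NatTrans

open CategoryTheory.Functor

variable {k : Type u} [Field k] {M : Type u'} [Category.{v} M] [MonoidalCategory M]
  {F G : M ⥤ FGModuleCat k} [F.Monoidal] [G.Monoidal]

theorem IsMonoidal.app_mapUnitOne {τ : F ⟶ G} (hτ : τ.IsMonoidal) {X : M} (f : 𝟙_ M ⟶ X) :
    τ.app X (F.mapUnitOne f) = G.mapUnitOne f :=
  (ConcreteCategory.congr_hom (τ.naturality f) _).trans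
    (congrArg (G.map f) (ConcreteCategory.congr_hom hτ.unit _))

theorem isMonoidal_of_app_mapUnitOne (hF : F.Nondegenerate) (τ : F ⟶ G)
    (h : ∀ (X : M) (f : 𝟙_ M ⟶ X), τ.app X (F.mapUnitOne f) = G.mapUnitOne f) :
    τ.IsMonoidal where
  unit := ConcreteCategory.ext <| LinearMap.ext_ring <| by
    change τ.app _ (ε F (FGModuleCat.unitOne k)) = ε G (FGModuleCat.unitOne k)
    rw [← mapUnitOne_id, h, mapUnitOne_id]
  tensor X Y := hF.tensor_hom_ext fun f g => by
    change τ.app _ (μ F X Y _) = μ G X Y (τ.app X _ ⊗ₜ τ.app Y _)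
    rw [μ_mapUnitOne_tmul, h, h, h, μ_mapUnitOne_tmul]

end CategoryTheory.NatTrans

/-- There is a unique monoidal natural isomorphism between monoidal functors
`F, G : M ⥤ FGModuleCat k` (with `M` rigid monoidal), provided that `F` is
non-degenerate, `dim F(X) ≥ dim G(X)` for all `X`, and `F`, `G` agree on
endomorphisms of the tensor unit. -/
theorem existsUnique_monoidalNatIso
    {k : Type u} [Field k] {M : Type u'} [Category.{v} M] [MonoidalCategory M]
    [RigidCategory M]
    (F G : M ⥤ FGModuleCat k) [F.Monoidal] [G.Monoidal]
    (hF : F.Nondegenerate)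
    (hdim : ∀ X : M, Module.finrank k (G.obj X) ≤ Module.finrank k (F.obj X))
    (hunit : ∀ φ : 𝟙_ M ⟶ 𝟙_ M,
      ε F ≫ F.map φ ≫ inv (ε F) = ε G ≫ G.map φ ≫ inv (ε G)) :
    ∃! e : F ≅ G, NatTrans.IsMonoidal e.hom := by
  choose e he using fun X => hF.exists_linearEquiv_apply_mapUnitOne hunit X (hdim X)
  let iso : F ≅ G := NatIso.ofComponents (fun X => (e X).toFGModuleCatIso) fun u =>
    hF.hom_ext fun f => by
      change e _ (F.map u _) = G.map u (e _ _)
      rw [F.map_mapUnitOne, he, he, G.map_mapUnitOne]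
  have hiso : ∀ X (f : 𝟙_ M ⟶ X), iso.hom.app X (F.mapUnitOne f) = G.mapUnitOne f := he
  refine ⟨iso, NatTrans.isMonoidal_of_app_mapUnitOne hF iso.hom hiso, fun e' he' => ?_⟩
  exact Iso.ext (NatTrans.ext (funext fun X => hF.hom_ext fun f =>
    (he'.app_mapUnitOne f).trans (hiso X f).symm))
end
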